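/- Let n ≥ 2 and 2 ≤ k ≤ n. If κ = (κ_1, …, κ_n) ∈ Γ_k and κ_i ≥ κ_j for two indices i, j, then σ_{k−1}(κ|i) ≤ σ_{k−1}(κ|j). In particular, if κ_1 ≥ κ_2 ≥ ⋯ ≥ κ_n, then σ_{k−1}(κ|1) ≤ σ_{k−1}(κ|i) for every i. -/

import Mathlib

open Finset

/-- The `k`-th elementary symmetric polynomial of `κ : Fin n → ℝ`. -/
noncomputable def esymm {n : ℕ} (k : ℕ) (κ : Fin n → ℝ) : ℝ :=
  ∑ s ∈ Finset.univ.powersetCard k, ∏ i ∈ s, κ i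

/-- `σ_k(κ|i)`: the `k`-th elementary symmetric polynomial of the tuple obtained
from `κ` by deleting the entry `κ i`. -/
noncomputable def esymmDel {n : ℕ} (k : ℕ) (κ : Fin n → ℝ) (i : Fin n) : ℝ :=
  ∑ s ∈ ({i}ᶜ : Finset (Fin n)).powersetCard k, ∏ j ∈ s, κ j

/-- `σ_k(κ|i,j)`: the `k`-th elementary symmetric polynomial of the tuple obtained
from `κ` by deleting the entries `κ i` and `κ j`. -/
noncomputable def esymmDel2 {n : ℕ} (k : ℕ) (κ : Fin n → ℝ) (i j : Fin n) : ℝ :=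
  ∑ s ∈ ({i, j}ᶜ : Finset (Fin n)).powersetCard k, ∏ l ∈ s, κ l

/-- The Garding cone `Γ_k = {κ : σ_j(κ) > 0 for all 1 ≤ j ≤ k}`. -/
def GardingCone {n : ℕ} (k : ℕ) : Set (Fin n → ℝ) :=
  {κ | ∀ j : ℕ, 1 ≤ j → j ≤ k → 0 < esymm j κ}

/-!
Deleting an entry from a point of `Γ_{k+1}` leaves a point of `Γ_k`. Inductively only
`σ_{k+1}(κ|i) > 0` is at stake; if it failed, positivity of `σ_{k+1}(κ) = σ_{k+1}(κ|i) + κ_i σ_k(κ|i)`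
and of `σ_{k+2}(κ)` would force `σ_k σ_{k+2} > σ_{k+1}²` for `κ|i`, against Newton's inequality.
Newton's inequality comes from Rolle's theorem: differentiating `∏ (X + κ_i)` keeps it real-rooted
and moves `σ_{k+2}, σ_{k+1}, σ_k` to the three lowest coefficients, where Vieta's formulas reduce
`2 q₀ q₂ ≤ q₁²` to `2 e_d e_{d-2} ≤ e_{d-1}²` for the `d` roots.
The theorem then follows from `σ_{k-1}(κ|i) - σ_{k-1}(κ|j) = (κ_j - κ_i) σ_{k-2}(κ|i,j)`.
-/

open Polynomial

namespace Multiset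

variable {R : Type*}

@[simp]
theorem esymm_zero [CommSemiring R] (s : Multiset R) : s.esymm 0 = 1 := by
  simp [esymm]

theorem esymm_cons_succ [CommSemiring R] (a : R) (s : Multiset R) (n : ℕ) :
    (a ::ₘ s).esymm (n + 1) = s.esymm (n + 1) + a * s.esymm n := by
  simp [esymm, powersetCard_cons, map_map, sum_map_mul_left]

theorem esymm_eq_zero_of_card_lt [CommSemiring R] {s : Multiset R} {n : ℕ}
    (h : card s < n) : s.esymm n = 0 := by
  simp [esymm, powersetCard_eq_empty _ h]

variable [CommRing R] [LinearOrder R] [IsStrictOrderedRing R]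

theorem two_mul_esymm_mul_esymm_le_sq {s : Multiset R} {c : ℕ} (hs : card s = c + 2) :
    2 * (s.esymm (c + 2) * s.esymm c) ≤ s.esymm (c + 1) ^ 2 := by
  induction c generalizing s with
  | zero =>
    obtain ⟨a, b, rfl⟩ := card_eq_two.1 hs
    simp only [zero_add, insert_eq_cons, esymm_pair_one, esymm_pair_two, esymm_zero]
    nlinarith [sq_nonneg a, sq_nonneg b]
  | succ c ih =>
    obtain ⟨a, t, rfl, ht⟩ := card_eq_succ_iff.1 hs
    have htop : t.esymm (c + 3) = 0 := esymm_eq_zero_of_card_lt (by omega)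
    rw [esymm_cons_succ, esymm_cons_succ, esymm_cons_succ, htop]
    nlinarith [ih ht, sq_nonneg (t.esymm (c + 2)), sq_nonneg a]

end Multiset

namespace Polynomial

theorem two_mul_coeff_zero_mul_coeff_two_le_sq {R : Type*} [CommRing R]
    [LinearOrder R] [IsStrictOrderedRing R] {q : R[X]}
    (hq : Multiset.card q.roots = q.natDegree) :
    2 * (q.coeff 0 * q.coeff 2) ≤ q.coeff 1 ^ 2 := by
  obtain hd | ⟨c, hc⟩ : q.natDegree < 2 ∨ ∃ c, q.natDegree = c + 2 :=
    (lt_or_ge _ _).imp_right fun h => ⟨_, (Nat.sub_add_cancel h).symm⟩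
  · rw [coeff_eq_zero_of_natDegree_lt hd, mul_zero, mul_zero]
    positivity
  have vieta (j : ℕ) (hj : j ≤ 2) := coeff_eq_esymm_roots_of_card hq (k := j) (by omega)
  rw [vieta 0 (by omega), vieta 1 (by omega), vieta 2 (by omega), hc]
  simp only [Nat.sub_zero, Nat.add_sub_cancel, show c + 2 - 1 = c + 1 by omega, pow_succ]
  have hroots := Multiset.two_mul_esymm_mul_esymm_le_sq (hq.trans hc)
  rcases neg_one_pow_eq_or R c with h | h <;> rw [h] <;> nlinarith [sq_nonneg q.leadingCoeff]

theorem card_roots_derivative_eq {p : ℝ[X]} (hp : Multiset.card p.roots = p.natDegree) :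
    Multiset.card p.derivative.roots = p.derivative.natDegree := by
  have := card_roots_le_derivative p
  have := card_roots' p.derivative
  rw [natDegree_derivative] at *
  omega

theorem card_roots_iterate_derivative_eq {p : ℝ[X]}
    (hp : Multiset.card p.roots = p.natDegree) (c : ℕ) :
    Multiset.card (derivative^[c] p).roots = (derivative^[c] p).natDegree := by
  induction c with
  | zero => exact hp
  | succ c ih =>
    rw [Function.iterate_succ_apply']
    exact card_roots_derivative_eq ih

theorem card_roots_multiset_prod_X_add_C {R : Type*} [CommRing R] [IsDomain R]
    (s : Multiset R) :
    Multiset.card (s.map (X + C ·)).prod.roots = (s.map (X + C ·)).prod.natDegree := by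
  have : s.map (X + C ·) = (s.map Neg.neg).map (X - C ·) := by
    simp [Multiset.map_map, sub_eq_add_neg]
  rw [this, roots_multiset_prod_X_sub_C, natDegree_multiset_prod_X_sub_C_eq_card]

end Polynomial

namespace Multiset

theorem esymm_mul_esymm_add_two_le_sq (s : Multiset ℝ) (k : ℕ) :
    s.esymm k * s.esymm (k + 2) ≤ s.esymm (k + 1) ^ 2 := by
  obtain hs | ⟨c, hc⟩ : card s < k + 2 ∨ ∃ c, card s = c + (k + 2) :=
    (lt_or_ge _ _).imp_right fun h => ⟨_, (Nat.sub_add_cancel h).symm⟩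
  · rw [esymm_eq_zero_of_card_lt hs, mul_zero]
    positivity
  have hq_coeff (j : ℕ) (hj : j ≤ 2) :
      (derivative^[c] (s.map (X + C ·)).prod).coeff j
        = (c + j).descFactorial c * s.esymm (k + 2 - j) := by
    rw [coeff_iterate_derivative, nsmul_eq_mul, prod_X_add_C_coeff _ (by omega), add_comm j,
      show card s - (c + j) = k + 2 - j by omega]
  have key := two_mul_coeff_zero_mul_coeff_two_le_sq
    (card_roots_iterate_derivative_eq (card_roots_multiset_prod_X_add_C s) c)
  rw [hq_coeff 0 (by omega), hq_coeff 1 (by omega), hq_coeff 2 (by omega)] at key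
  simp only [add_zero, Nat.sub_zero, Nat.add_sub_cancel, show k + 2 - 1 = k + 1 by omega] at key
  have h1 := Nat.succ_descFactorial c c
  have h2 := Nat.succ_descFactorial (c + 1) c
  simp only [Nat.add_sub_cancel_left, show c + 1 + 1 - c = 2 by omega, one_mul] at h1 h2
  have h1' : ((c + 1).descFactorial c : ℝ) = (c + 1) * c.descFactorial c := by exact_mod_cast h1
  have h2' : 2 * ((c + 2).descFactorial c : ℝ) = (c + 2) * (c + 1).descFactorial c := by
    exact_mod_cast h2
  rw [h1'] at key h2'
  have hc1 : (0 : ℝ) < (c + 1) * c.descFactorial c ^ 2 := by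
    have : 0 < c.descFactorial c := Nat.descFactorial_pos.2 le_rfl
    positivity
  have reduced : ((c : ℝ) + 2) * (s.esymm k * s.esymm (k + 2)) ≤ (c + 1) * s.esymm (k + 1) ^ 2 := by
    refine le_of_mul_le_mul_left ?_ hc1
    linear_combination key - c.descFactorial c * s.esymm (k + 2) * s.esymm k * h2'
  nlinarith [sq_nonneg (s.esymm (k + 1)), (c.cast_nonneg : (0 : ℝ) ≤ c)]

def InGardingCone (k : ℕ) (s : Multiset ℝ) : Prop :=
  ∀ j, 1 ≤ j → j ≤ k → 0 < s.esymm j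

namespace InGardingCone

variable {s : Multiset ℝ} {k : ℕ}

theorem mono (h : s.InGardingCone k) {m : ℕ} (hm : m ≤ k) : s.InGardingCone m :=
  fun j hj hjm => h j hj (hjm.trans hm)

theorem esymm_pos (h : s.InGardingCone k) : 0 < s.esymm k := by
  rcases k with _ | k
  · simp
  · exact h _ k.succ_pos le_rfl

theorem of_cons {a : ℝ} (h : (a ::ₘ s).InGardingCone (k + 1)) : s.InGardingCone k := by
  induction k with
  | zero => intro j hj hj0; omega
  | succ k ih =>
    have hs : s.InGardingCone k := ih (h.mono (k + 1).le_succ)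
    intro j hj hjk
    rcases hjk.lt_or_eq with hjk | rfl
    · exact hs j hj (by omega)
    by_contra! hk1
    have hk := hs.esymm_pos
    have h1 := h (k + 1) (by omega) (by omega)
    have h2 := h (k + 2) (by omega) le_rfl
    rw [esymm_cons_succ] at h1 h2
    nlinarith [s.esymm_mul_esymm_add_two_le_sq k, mul_pos hk h2, mul_nonneg (neg_nonneg.2 hk1) h1.le]

theorem esymm_cons_le_esymm_cons {a b : ℝ} {r : Multiset ℝ}
    (h : (a ::ₘ b ::ₘ r).InGardingCone (k + 1)) (hba : b ≤ a) :
    (b ::ₘ r).esymm k ≤ (a ::ₘ r).esymm k := by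
  rcases k with _ | k
  · simp
  have hr := h.of_cons.of_cons.esymm_pos
  rw [esymm_cons_succ, esymm_cons_succ]
  nlinarith [mul_nonneg (sub_nonneg.2 hba) hr.le]

end InGardingCone

end Multiset

theorem Finset.val_map_eq_cons_erase {α β : Type*} [DecidableEq α] (f : α → β) {s : Finset α}
    {a : α} (ha : a ∈ s) : s.val.map f = f a ::ₘ (s.erase a).val.map f := by
  rw [Finset.erase_val, ← Multiset.map_cons, Multiset.cons_erase ha]

/-- If `κ ∈ Γ_k` and `κ i ≥ κ j`, then `σ_{k-1}(κ|i) ≤ σ_{k-1}(κ|j)`; in particular,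
if `κ` is ordered decreasingly, then `σ_{k-1}(κ|1) ≤ σ_{k-1}(κ|i)` for every `i`. -/
theorem stmt_8 (n k : ℕ) (hn : 2 ≤ n) (hk1 : 2 ≤ k)
    (κ : Fin n → ℝ) (hκ : κ ∈ GardingCone k) :
    (∀ i j : Fin n, κ j ≤ κ i → esymmDel (k - 1) κ i ≤ esymmDel (k - 1) κ j) ∧
    (Antitone κ → ∀ i : Fin n,
      esymmDel (k - 1) κ ⟨0, by omega⟩ ≤ esymmDel (k - 1) κ i) := by
  have hmono (i j : Fin n) (hji : κ j ≤ κ i) : esymmDel (k - 1) κ i ≤ esymmDel (k - 1) κ j := by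
    obtain rfl | hij := eq_or_ne i j
    · rfl
    have hj : j ∈ univ.erase i := mem_erase.2 ⟨hij.symm, mem_univ j⟩
    have hi : i ∈ univ.erase j := mem_erase.2 ⟨hij, mem_univ i⟩
    set r := ((univ.erase i).erase j).val.map κ
    have hcone : (κ i ::ₘ κ j ::ₘ r).InGardingCone (k - 1 + 1) := by
      rw [← val_map_eq_cons_erase κ hj, ← val_map_eq_cons_erase κ (mem_univ i)]
      intro m hm1 hm2
      rw [esymm_map_val]
      exact hκ m hm1 (by omega)
    rw [esymmDel, esymmDel, ← esymm_map_val, ← esymm_map_val, compl_singleton, compl_singleton,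
      val_map_eq_cons_erase κ hj, val_map_eq_cons_erase κ hi, erase_right_comm (a := j)]
    exact hcone.esymm_cons_le_esymm_cons hji
  exact ⟨hmono, fun hanti i => hmono _ i (hanti (Nat.zero_le (i : ℕ)))⟩
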